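/- arXiv:1409.2597 — 3 statements merged into one kernel-verified Lean document; each statement's English description precedes it below -/
import Mathlib

section
/- Suppose a buyer's value distribution on [0, v̄] has affine virtual value φ(v) = αv - β with α > 1, β > 0, and the seller bids the BNE price P = P(c) satisfying φ(P) = (c+β)/α. Then the conditional maximum surplus E[(v-c)·1{v≥c} | c] equals α^{(α+1)/(α-1)} times the conditional revenue w(P)(1-F(P)) of the fee schedule w(P) = P - φ(P). Hence the fee-setting mechanism's revenue is exactly a 1/α^{(α+1)/(α-1)} fraction of maximum surplus, conditionally on every c. -/
/-!
Integrating by parts, the surplus `∫_c^v̄ (v - c) f` equals `∫_c^v̄ (1 - F)`, using `F v̄ = 1`; the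
density is integrable because it is a nonnegative derivative. With `w v = (1 - α) v + β`, the
survival function `(w / β) ^ (1 / (α - 1))` integrates from `c` to the root `v̄` of `w` to
`β / α * (w c / β) ^ (α / (α - 1))`. The price equation gives `w c = α ^ 2 * w P`, and splitting
`α ^ (2 α / (α - 1)) = α * α ^ ((α + 1) / (α - 1))` and `x ^ (α / (α - 1)) = x * x ^ (1 / (α - 1))`
yields the claim.
-/

open MeasureTheory Set intervalIntegral

lemma integral_max_sub_mul_eq_integral_sub_mul (g : ℝ → ℝ) {a b c : ℝ} (hac : a ≤ c)
    (hcb : c ≤ b) :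
    ∫ v in a..b, max (v - c) 0 * g v = ∫ v in c..b, (v - c) * g v := by
  rw [integral_of_le (hac.trans hcb), integral_of_le hcb,
    setIntegral_eq_of_subset_of_forall_sdiff_eq_zero measurableSet_Ioc
      (Ioc_subset_Ioc_left hac) fun v hv => ?_]
  · refine setIntegral_congr_fun measurableSet_Ioc fun v hv => ?_
    rw [max_eq_left (sub_nonneg.2 hv.1.le)]
  · have hvc : v ≤ c := not_lt.1 fun h => hv.2 ⟨h, hv.1.2⟩
    rw [max_eq_right (sub_nonpos.2 hvc), zero_mul]

lemma integral_sub_mul_deriv_eq_integral_one_sub {F f : ℝ → ℝ} {c b : ℝ} (hcb : c ≤ b)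
    (hF : ContinuousOn F (Icc c b)) (hderiv : ∀ x ∈ Ioo c b, HasDerivAt F (f x) x)
    (hf : ∀ x ∈ Ioo c b, 0 ≤ f x) (hFb : F b = 1) :
    ∫ v in c..b, (v - c) * f v = ∫ v in c..b, (1 - F v) := by
  have hcb' : Ioo (min c b) (max c b) = Ioo c b := by rw [min_eq_left hcb, max_eq_right hcb]
  rw [← uIcc_of_le hcb] at hF
  rw [integral_mul_deriv_eq_deriv_mul_of_hasDerivAt (u := fun v => v - c) (u' := fun _ => 1)
    (v := fun v => F v - 1) (by fun_prop) (hF.sub continuousOn_const)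
    (fun x _ => (hasDerivAt_id x).sub_const c) (fun x hx => (hderiv x (hcb' ▸ hx)).sub_const 1)
    intervalIntegrable_const
    (intervalIntegrable_deriv_of_nonneg hF (hcb' ▸ hderiv) (hcb' ▸ hf))]
  simp only [hFb, sub_self, zero_mul, mul_zero, zero_sub, one_mul, ← intervalIntegral.integral_neg,
    neg_sub]

lemma integral_one_sub_mul_add_div_rpow {α β c : ℝ} (hα : 1 < α) (hβ : 0 < β) :
    ∫ v in c..β / (α - 1), (((1 - α) * v + β) / β) ^ (1 / (α - 1))
      = β / α * (((1 - α) * c + β) / β) ^ (α / (α - 1)) := by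
  have hα1 : α - 1 ≠ 0 := by linarith
  have hk : (1 - α) / β ≠ 0 := div_ne_zero (by linarith) hβ.ne'
  have h := integral_comp_mul_add (fun x : ℝ => x ^ (1 / (α - 1))) (a := c) (b := β / (α - 1)) hk 1
  rw [integral_rpow (Or.inl (by linarith [show 0 < 1 / (α - 1) by positivity]))] at h
  convert h using 1
  · congr 1; ext v; congr 1; field_simp
  · have hσ : 1 / (α - 1) + 1 = α / (α - 1) := by field_simp; ring
    have hb : (1 - α) / β * (β / (α - 1)) + 1 = 0 := by field_simp; ring
    have hc : (1 - α) / β * c + 1 = ((1 - α) * c + β) / β := by field_simp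
    rw [hσ, hb, hc, Real.zero_rpow (by positivity), smul_eq_mul]
    generalize (((1 - α) * c + β) / β) ^ (α / (α - 1)) = X
    have h1α : 1 - α ≠ 0 := by linarith
    field_simp
    ring

lemma one_sub_mul_add_eq_sq_mul {α β c P : ℝ} (hα : α ≠ 0) (hPc : α * P - β = (c + β) / α) :
    (1 - α) * c + β = α ^ 2 * ((1 - α) * P + β) := by
  have hc : c = α * (α * P - β) - β := by rw [hPc]; field_simp; ring
  rw [hc]
  ring

lemma div_mul_rpow_eq_rpow_mul {α β w : ℝ} (hα : 1 < α) (hβ : 0 < β) (hw : 0 ≤ w) :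
    β / α * (α ^ 2 * w / β) ^ (α / (α - 1))
      = α ^ ((α + 1) / (α - 1)) * (w * (w / β) ^ (1 / (α - 1))) := by
  have hα0 : 0 < α := by linarith
  have hα1 : α - 1 ≠ 0 := by linarith
  have hα2 : ((2 : ℕ) : ℝ) * (α / (α - 1)) = (α + 1) / (α - 1) + 1 := by
    push_cast; field_simp; ring
  have hσ : α / (α - 1) = 1 / (α - 1) + 1 := by field_simp; ring
  rw [mul_div_assoc, Real.mul_rpow (by positivity) (by positivity),
    ← Real.rpow_natCast_mul hα0.le, hα2, Real.rpow_add hα0, Real.rpow_one, hσ,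
    Real.rpow_add' (by positivity) (by positivity), Real.rpow_one]
  field_simp

/-- Conditional maximum surplus equals α^{(α+1)/(α-1)} times the
affine fee-setting mechanism's conditional revenue. -/
theorem stmt8 (α β vbar c P : ℝ) (F f : ℝ → ℝ)
    (hα : 1 < α) (hβ : 0 < β) (hvbar : vbar = β/(α-1)) (hc : 0 ≤ c)
    (hsurv : ∀ v ∈ Set.Icc (0:ℝ) vbar, 1 - F v = (((1-α)*v + β)/β) ^ (1/(α-1)))
    (hf : ∀ v ∈ Set.Icc (0:ℝ) vbar, HasDerivWithinAt F (f v) (Set.Icc 0 vbar) v)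
    (hfpos : ∀ v ∈ Set.Icc (0:ℝ) vbar, 0 ≤ f v)
    (hP : P ∈ Set.Icc (0:ℝ) vbar) (hPc : α*P - β = (c+β)/α) :
    (∫ v in (0:ℝ)..vbar, max (v - c) 0 * f v)
      = α ^ ((α+1)/(α-1)) * (((1-α)*P + β) * (1 - F P)) := by
  subst hvbar
  have hα1 : 0 < α - 1 := by linarith
  have hwc := one_sub_mul_add_eq_sq_mul (by positivity) hPc
  have hwP : 0 ≤ (1 - α) * P + β := by
    have := (le_div_iff₀ hα1).1 hP.2
    linarith
  have hcb : c ≤ β / (α - 1) := by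
    have : 0 ≤ (1 - α) * c + β := hwc ▸ by positivity
    rw [le_div_iff₀ hα1]
    linarith
  have hsub : Icc c (β / (α - 1)) ⊆ Icc 0 (β / (α - 1)) := Icc_subset_Icc_left hc
  have hFb : F (β / (α - 1)) = 1 := by
    have := hsurv _ ⟨hc.trans hcb, le_rfl⟩
    rw [show (1 - α) * (β / (α - 1)) + β = 0 by field_simp; ring, zero_div,
      Real.zero_rpow (by positivity)] at this
    linarith
  have hderiv : ∀ x ∈ Ioo c (β / (α - 1)), HasDerivAt F (f x) x := fun x hx =>
    (hf x (hsub (Ioo_subset_Icc_self hx))).hasDerivAt (Icc_mem_nhds (hc.trans_lt hx.1) hx.2)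
  rw [integral_max_sub_mul_eq_integral_sub_mul f hc hcb,
    integral_sub_mul_deriv_eq_integral_one_sub hcb
      (fun x hx => (hf x (hsub hx)).continuousWithinAt.mono hsub) hderiv
      (fun x hx => hfpos x (hsub (Ioo_subset_Icc_self hx))) hFb,
    integral_congr fun v hv => hsurv v (hsub (by rwa [uIcc_of_le hcb] at hv)),
    integral_one_sub_mul_add_div_rpow hα hβ, hwc, hsurv P hP]
  exact div_mul_rpow_eq_rpow_mul hα hβ hwP
end

section
/- Let F be an MHR distribution (hazard rate h(v)=f(v)/(1-F(v)) non-decreasing, equivalently cumulative hazard H convex) with F(0)=0, and let φ(v)=v-1/h(v) be its virtual value. Then for any point P in the support with h(P)>0: 1 - F(φ(P)) ≤ e·(1 - F(P)). -/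
/-!
Writing `1 - F = exp (-H)` with the cumulative hazard `H = -log (1 - F)`, whose derivative is the
hazard rate `h`, monotonicity of `h` gives the tangent-type bound `H P - H q ≤ h P * (P - q)` for
`q ≤ P`. At `q = φ(P) = P - 1 / h P` the right-hand side is `1`, so
`1 - F (φ P) = exp (-H (φ P)) ≤ exp (1 - H P) = e * (1 - F P)`.
-/

open Set Real

theorem hasDerivWithinAt_neg_log_one_sub {F : ℝ → ℝ} {f : ℝ} {s : Set ℝ} {v : ℝ}
    (hF : HasDerivWithinAt F f s v) (hv : F v ≠ 1) :
    HasDerivWithinAt (fun v => -log (1 - F v)) (f / (1 - F v)) s v := by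
  have h := HasDerivWithinAt.neg (HasDerivWithinAt.log (hF.const_sub 1) (sub_ne_zero.mpr hv.symm))
  rwa [neg_div, neg_neg] at h

theorem Set.OrdConnected.sub_le_mul_sub_of_hasDerivWithinAt_of_monotoneOn {G g : ℝ → ℝ}
    {s : Set ℝ} (hs : s.OrdConnected) (hG : ∀ v ∈ s, HasDerivWithinAt G (g v) s v)
    (hg : MonotoneOn g s) {x y : ℝ} (hx : x ∈ s) (hy : y ∈ s) (hxy : x ≤ y) :
    G y - G x ≤ g y * (y - x) := by
  have hsub : Icc x y ⊆ s := hs.out hx hy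
  have hderiv : ∀ z ∈ Ioo x y, HasDerivAt G (g z) z := fun z hz =>
    ((hG z (hsub (Ioo_subset_Icc_self hz))).mono hsub).hasDerivAt (Icc_mem_nhds hz.1 hz.2)
  refine (convex_Icc x y).image_sub_le_mul_sub_of_deriv_le
    (fun z hz => (hG z (hsub hz)).continuousWithinAt.mono hsub) ?_ ?_ x ⟨le_rfl, hxy⟩ y
    ⟨hxy, le_rfl⟩ hxy
  · rw [interior_Icc]
    exact fun z hz => (hderiv z hz).differentiableAt.differentiableWithinAt
  · rw [interior_Icc]
    intro z hz
    rw [(hderiv z hz).deriv]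
    exact hg (hsub (Ioo_subset_Icc_self hz)) hy hz.2.le

theorem Set.OrdConnected.one_sub_le_exp_mul_one_sub_of_monotoneOn_hazard {F f : ℝ → ℝ}
    {s : Set ℝ} (hs : s.OrdConnected) (hF : ∀ v ∈ s, HasDerivWithinAt F (f v) s v)
    (hFlt : ∀ v ∈ s, F v < 1) (hMHR : MonotoneOn (fun v => f v / (1 - F v)) s)
    {x y : ℝ} (hx : x ∈ s) (hy : y ∈ s) (hxy : x ≤ y) :
    1 - F x ≤ exp (f y / (1 - F y) * (y - x)) * (1 - F y) := by
  have hH := hs.sub_le_mul_sub_of_hasDerivWithinAt_of_monotoneOn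
    (fun v hv => hasDerivWithinAt_neg_log_one_sub (hF v hv) (hFlt v hv).ne) hMHR hx hy hxy
  have hFx : 0 < 1 - F x := sub_pos.mpr (hFlt x hx)
  have hFy : 0 < 1 - F y := sub_pos.mpr (hFlt y hy)
  calc 1 - F x = exp (log (1 - F x)) := (exp_log hFx).symm
    _ ≤ exp (f y / (1 - F y) * (y - x) + log (1 - F y)) := exp_le_exp.mpr (by linarith)
    _ = exp (f y / (1 - F y) * (y - x)) * (1 - F y) := by rw [exp_add, exp_log hFy]

theorem stmt12_general (vbar : ℝ) (F f : ℝ → ℝ) (P : ℝ)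
    (hf : ∀ v ∈ Set.Icc (0:ℝ) vbar, HasDerivWithinAt F (f v) (Set.Icc 0 vbar) v)
    (hfpos : ∀ v ∈ Set.Icc (0:ℝ) vbar, 0 < f v)
    (hFlt : ∀ v ∈ Set.Icc (0:ℝ) vbar, F v < 1)
    (hMHR : MonotoneOn (fun v => f v / (1 - F v)) (Set.Icc 0 vbar))
    (hP : P ∈ Set.Icc (0:ℝ) vbar)
    (hφ : P - (1 - F P)/(f P) ∈ Set.Icc (0:ℝ) vbar) :
    1 - F (P - (1 - F P)/(f P)) ≤ Real.exp 1 * (1 - F P) := by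
  have hfP : 0 < f P := hfpos P hP
  have hFP : 0 < 1 - F P := sub_pos.mpr (hFlt P hP)
  have hφP : P - (1 - F P) / f P ≤ P := sub_le_self _ (div_pos hFP hfP).le
  have hbound := ordConnected_Icc.one_sub_le_exp_mul_one_sub_of_monotoneOn_hazard hf hFlt hMHR
    hφ hP hφP
  have hexponent : f P / (1 - F P) * (P - (P - (1 - F P) / f P)) = 1 := by
    field_simp
    ring
  rwa [hexponent] at hbound

/-- For an MHR distribution, 1 - F(φ(P)) ≤ e·(1 - F(P)). -/
theorem stmt12 (vbar : ℝ) (F f : ℝ → ℝ) (P : ℝ)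
    (hF0 : F 0 = 0)
    (hf : ∀ v ∈ Set.Icc (0:ℝ) vbar, HasDerivWithinAt F (f v) (Set.Icc 0 vbar) v)
    (hfc : ContinuousOn f (Set.Icc 0 vbar))
    (hfpos : ∀ v ∈ Set.Icc (0:ℝ) vbar, 0 < f v)
    (hFlt : ∀ v ∈ Set.Icc (0:ℝ) vbar, F v < 1)
    (hMHR : MonotoneOn (fun v => f v / (1 - F v)) (Set.Icc 0 vbar))
    (hP : P ∈ Set.Icc (0:ℝ) vbar)
    (hφ : P - (1 - F P)/(f P) ∈ Set.Icc (0:ℝ) vbar) :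
    1 - F (P - (1 - F P)/(f P)) ≤ Real.exp 1 * (1 - F P) :=
  stmt12_general vbar F f P hf hfpos hFlt hMHR hP hφ
end

section
/- Suppose the buyer's value is uniform on [0,1] and the seller has regular cost distribution G with density g. Let y = min{φ_S^{-1}(1), c̄}. Then the optimal Myerson revenue satisfies OPT ≤ (1-y)²G(y)/8 + (1/8)∫₀^y (1-c)² g(c) dc. -/
/-!
With `q = G c / g c`, the hypothesis `φ_S(c) ≤ 1` on `[0, y]` gives `0 ≤ q ≤ 1 - c`, hence
`(1 - φ_S(c))² = (1 - c - q)² ≤ (1 - c)² - (1 - c) q`. Multiplying by `g c` turns `q g` into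
`G`, and integrating `(1 - c)² g(c)` by parts expresses `∫ (1 - c) G(c)` through
`(1 - y)² G(y)` and `∫ (1 - c)² g(c)`.
-/

open Set intervalIntegral
open scoped Interval

theorem integral_two_mul_sub_one_sub (t : ℝ) :
    ∫ v in (1 + t) / 2..1, (2 * v - 1 - t) = (1 - t) ^ 2 / 4 := by
  have hderiv : ∀ v ∈ [[(1 + t) / 2, 1]],
      HasDerivAt (fun v => v ^ 2 - (1 + t) * v) (2 * v - 1 - t) v := fun v _ =>
    ((hasDerivAt_pow 2 v).sub ((hasDerivAt_id v).const_mul (1 + t))).congr_deriv (by simp; ring)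
  rw [integral_eq_sub_of_hasDerivAt hderiv (Continuous.intervalIntegrable (by fun_prop) _ _)]
  ring

theorem sq_sub_le_sq_sub_mul {a q : ℝ} (hq : 0 ≤ q) (hqa : q ≤ a) :
    (a - q) ^ 2 ≤ a ^ 2 - a * q := by
  nlinarith

theorem integral_one_sub_sq_mul_eq {a b : ℝ} {G g : ℝ → ℝ}
    (hG : ∀ c ∈ [[a, b]], HasDerivWithinAt G (g c) [[a, b]] c) (hg : ContinuousOn g [[a, b]]) :
    ∫ c in a..b, (1 - c) ^ 2 * g c
      = (1 - b) ^ 2 * G b - (1 - a) ^ 2 * G a + 2 * ∫ c in a..b, (1 - c) * G c := by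
  have hsq : ∀ c ∈ [[a, b]],
      HasDerivWithinAt (fun c : ℝ => (1 - c) ^ 2) (-2 * (1 - c)) [[a, b]] c :=
    fun c _ => (((hasDerivAt_id c).const_sub 1).pow 2).hasDerivWithinAt.congr_deriv (by simp)
  rw [integral_mul_deriv_eq_deriv_mul_of_hasDerivWithinAt hsq hG
    (Continuous.intervalIntegrable (by fun_prop) _ _) hg.intervalIntegrable]
  simp only [neg_mul, mul_assoc, integral_neg, integral_const_mul]
  ring

theorem stmt17_general (cbar y : ℝ) (G g : ℝ → ℝ)
    (hG0 : G 0 = 0)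
    (hg : ∀ c ∈ Set.Icc (0:ℝ) cbar, HasDerivWithinAt G (g c) (Set.Icc 0 cbar) c)
    (hgpos : ∀ c ∈ Set.Icc (0:ℝ) cbar, 0 < g c)
    (hgc : ContinuousOn g (Set.Icc 0 cbar))
    (hGpos : ∀ c ∈ Set.Icc (0:ℝ) cbar, 0 ≤ G c)
    (hy : y ∈ Set.Icc (0:ℝ) cbar)
    (hy1 : ∀ c ∈ Set.Icc (0:ℝ) y, c + G c / g c ≤ 1) :
    (∫ c in (0:ℝ)..y,
        (∫ v in ((1 + (c + G c / g c))/2)..(1:ℝ), (2*v - 1 - (c + G c/g c))) * g c)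
      ≤ (1-y)^2 * G y / 8 + (1/8) * ∫ c in (0:ℝ)..y, (1-c)^2 * g c := by
  have hsub : [[0, y]] ⊆ Icc 0 cbar := by rw [uIcc_of_le hy.1]; exact Icc_subset_Icc_right hy.2
  have hGy : ∀ c ∈ [[0, y]], HasDerivWithinAt G (g c) [[0, y]] c :=
    fun c hc => (hg c (hsub hc)).mono hsub
  have hgy : ContinuousOn g [[0, y]] := hgc.mono hsub
  have hGcont : ContinuousOn G [[0, y]] := fun c hc => (hGy c hc).continuousWithinAt
  have hφ : ContinuousOn (fun c => c + G c / g c) [[0, y]] :=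
    continuousOn_id.add (hGcont.div hgy fun c hc => (hgpos c (hsub hc)).ne')
  have hpointwise : ∀ c ∈ Icc 0 y,
      (1 - (c + G c / g c)) ^ 2 / 4 * g c ≤ ((1 - c) ^ 2 * g c - (1 - c) * G c) / 4 := by
    intro c hc
    have hc' := hsub (Icc_subset_uIcc hc)
    have hq := sq_sub_le_sq_sub_mul (div_nonneg (hGpos c hc') (hgpos c hc').le)
      (show G c / g c ≤ 1 - c by linarith [hy1 c hc])
    calc (1 - (c + G c / g c)) ^ 2 / 4 * g c = (1 - c - G c / g c) ^ 2 * g c / 4 := by ring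
      _ ≤ ((1 - c) ^ 2 - (1 - c) * (G c / g c)) * g c / 4 := by gcongr; exact (hgpos c hc').le
      _ = ((1 - c) ^ 2 * g c - (1 - c) * G c) / 4 := by field_simp [(hgpos c hc').ne']
  simp only [integral_two_mul_sub_one_sub]
  calc _ ≤ ∫ c in (0:ℝ)..y, ((1 - c) ^ 2 * g c - (1 - c) * G c) / 4 :=
        integral_mono_on hy.1 (by apply ContinuousOn.intervalIntegrable; fun_prop)
          (by apply ContinuousOn.intervalIntegrable; fun_prop) hpointwise
    _ = _ := by
        rw [integral_div, integral_sub (by apply ContinuousOn.intervalIntegrable; fun_prop)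
          (by apply ContinuousOn.intervalIntegrable; fun_prop), integral_one_sub_sq_mul_eq hGy hgy,
          hG0]
        ring

/-- Upper bound on Myerson's optimal revenue with a uniform [0,1] buyer and a
regular seller, where y = min{φ_S⁻¹(1), c̄}. -/
theorem stmt17 (cbar y : ℝ) (G g : ℝ → ℝ)
    (hcbar : 0 < cbar)
    (hG0 : G 0 = 0)
    (hg : ∀ c ∈ Set.Icc (0:ℝ) cbar, HasDerivWithinAt G (g c) (Set.Icc 0 cbar) c)
    (hgpos : ∀ c ∈ Set.Icc (0:ℝ) cbar, 0 < g c)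
    (hgc : ContinuousOn g (Set.Icc 0 cbar))
    (hGpos : ∀ c ∈ Set.Icc (0:ℝ) cbar, 0 ≤ G c)
    (hreg : MonotoneOn (fun c => c + G c / g c) (Set.Icc 0 cbar))
    (hy : y ∈ Set.Icc (0:ℝ) cbar)
    (hy1 : ∀ c ∈ Set.Icc (0:ℝ) y, c + G c / g c ≤ 1) :
    (∫ c in (0:ℝ)..y,
        (∫ v in ((1 + (c + G c / g c))/2)..(1:ℝ), (2*v - 1 - (c + G c/g c))) * g c)
      ≤ (1-y)^2 * G y / 8 + (1/8) * ∫ c in (0:ℝ)..y, (1-c)^2 * g c :=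
  stmt17_general cbar y G g hG0 hg hgpos hgc hGpos hy hy1
end
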